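/- arXiv:2410.12038 — 2 statements merged into one kernel-verified Lean document; each statement's English description precedes it below -/
import Mathlib

section
/- Let f : M -> M be a local homeomorphism on a compact metric space whose inverse branches of f^N are L-Lipschitz, and suppose for every x there exists y with f^N(y) = x such that the inverse branch of f^N at x through y is gamma-Lipschitz with gamma < 1. If gamma * L^{N(l-1)} < 1, then for every x and every n, there exists an inverse branch h of f^{n*N*l} defined near x that is Lipschitz with constant at most (gamma * L^{N(l-1)})^n. -/
/-- Under condition (C) (every point has a `γ`-contracting inverse branch of `f^N`)
and the `L`-Lipschitz bound on all inverse branches of `f^N`, if `γ L^{N(l-1)} < 1`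
then every point admits, for every `n`, an inverse branch of `f^{n N l}` that is
Lipschitz with constant `(γ L^{N(l-1)})^n`. -/
theorem stmt_12 {M : Type*} [MetricSpace M] [CompactSpace M]
    (f : M → M) (hf : Continuous f) (N l : ℕ) (hN : 1 ≤ N) (hl : 1 ≤ l)
    (γ L : ℝ) (hγ0 : 0 < γ) (hγ1 : γ < 1) (hL : 1 ≤ L)
    (hcontr : γ * L ^ (N * (l - 1)) < 1)
    -- every inverse branch of f^N is L-Lipschitz
    (hLip : ∀ (x : M) (δ : ℝ) (h : M → M), 0 < δ →
      ContinuousOn h (Metric.ball x δ) →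
      (∀ y ∈ Metric.ball x δ, f^[N] (h y) = y) →
      LipschitzOnWith (Real.toNNReal L) h (Metric.ball x δ))
    -- condition (C): some inverse branch of f^N at each point is γ-Lipschitz
    (hC : ∀ x : M, ∃ δ : ℝ, 0 < δ ∧ ∃ h : M → M,
      (∀ y ∈ Metric.ball x δ, f^[N] (h y) = y) ∧
      LipschitzOnWith (Real.toNNReal γ) h (Metric.ball x δ)) :
    ∀ (x : M) (n : ℕ), 1 ≤ n → ∃ δ : ℝ, 0 < δ ∧ ∃ h : M → M,
      (∀ y ∈ Metric.ball x δ, f^[n * N * l] (h y) = y) ∧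
      LipschitzOnWith (Real.toNNReal ((γ * L ^ (N * (l - 1))) ^ n)) h (Metric.ball x δ) := by
  -- Auxiliary claim: for every `k` and `x` there is an inverse branch of `f^[k*N]`
  -- near `x` which is Lipschitz with constant `γ^k`, built by composing `k` of the
  -- contracting branches provided by condition (C).
  have aux : ∀ (k : ℕ) (x : M), ∃ δ : ℝ, 0 < δ ∧ ∃ h : M → M,
      (∀ y ∈ Metric.ball x δ, f^[k * N] (h y) = y) ∧
      LipschitzOnWith (Real.toNNReal γ ^ k) h (Metric.ball x δ) := by
    intro k
    induction k with
    | zero =>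
      intro x
      refine ⟨1, one_pos, id, fun y _ => by simp, ?_⟩
      simpa using (LipschitzWith.id (α := M)).lipschitzOnWith (s := Metric.ball x 1)
    | succ k ih =>
      intro x
      obtain ⟨δ₁, hδ₁, h₁, hinv₁, hlip₁⟩ := hC x
      obtain ⟨δ₂, hδ₂, h₂, hinv₂, hlip₂⟩ := ih (h₁ x)
      set δ : ℝ := min δ₁ (δ₂ / γ) with hδdef
      have hδpos : 0 < δ := lt_min hδ₁ (div_pos hδ₂ hγ0)
      have hsub : Metric.ball x δ ⊆ Metric.ball x δ₁ :=
        Metric.ball_subset_ball (min_le_left _ _)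
      have hmaps : Set.MapsTo h₁ (Metric.ball x δ) (Metric.ball (h₁ x) δ₂) := by
        intro y hy
        have hy₁ : y ∈ Metric.ball x δ₁ := hsub hy
        have hx₁ : x ∈ Metric.ball x δ₁ := Metric.mem_ball_self hδ₁
        have hd : dist (h₁ y) (h₁ x) ≤ γ * dist y x := by
          have := (lipschitzOnWith_iff_dist_le_mul.mp hlip₁) y hy₁ x hx₁
          simpa [Real.coe_toNNReal _ hγ0.le] using this
        have hyx : dist y x < δ₂ / γ := lt_of_lt_of_le (Metric.mem_ball.mp hy) (min_le_right _ _)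
        have : γ * dist y x < γ * (δ₂ / γ) := by
          exact mul_lt_mul_of_pos_left hyx hγ0
        rw [mul_div_cancel₀ _ hγ0.ne'] at this
        exact Metric.mem_ball.mpr (lt_of_le_of_lt hd this)
      refine ⟨δ, hδpos, h₂ ∘ h₁, ?_, ?_⟩
      · intro y hy
        have h1 : f^[N] (h₁ y) = y := hinv₁ y (hsub hy)
        have h2 : f^[k * N] (h₂ (h₁ y)) = h₁ y := hinv₂ (h₁ y) (hmaps hy)
        have : (k + 1) * N = N + k * N := by ring
        rw [this, Function.iterate_add_apply, Function.comp_apply, h2, h1]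
      · have hlip₁' : LipschitzOnWith (Real.toNNReal γ) h₁ (Metric.ball x δ) :=
          hlip₁.mono hsub
        have := hlip₂.comp hlip₁' hmaps
        simpa [pow_succ] using this
  intro x n hn
  obtain ⟨δ, hδ, h, hinv, hlip⟩ := aux (n * l) x
  refine ⟨δ, hδ, h, ?_, ?_⟩
  · intro y hy
    have : n * N * l = n * l * N := by ring
    rw [this]
    exact hinv y hy
  · have hK : Real.toNNReal γ ^ (n * l) ≤ Real.toNNReal ((γ * L ^ (N * (l - 1))) ^ n) := by
      have h1 : Real.toNNReal γ ^ (n * l) = Real.toNNReal (γ ^ (n * l)) := by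
        rw [Real.toNNReal_pow hγ0.le]
      rw [h1]
      apply Real.toNNReal_mono
      have hγl : γ ^ l ≤ γ := by
        calc γ ^ l ≤ γ ^ 1 := pow_le_pow_of_le_one hγ0.le hγ1.le hl
          _ = γ := pow_one γ
      have hγLge : γ ≤ γ * L ^ (N * (l - 1)) :=
        le_mul_of_one_le_right hγ0.le (one_le_pow₀ hL)
      calc γ ^ (n * l) = (γ ^ l) ^ n := by rw [← pow_mul, Nat.mul_comm]
        _ ≤ (γ * L ^ (N * (l - 1))) ^ n :=
            pow_le_pow_left₀ (pow_nonneg hγ0.le l) (hγl.trans hγLge) n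
    exact fun a ha b hb => le_trans (hlip ha hb)
      (mul_le_mul_left (ENNReal.coe_le_coe.mpr hK) _)
end

section
/- Let D_k = C L^{kNd} (number of covering balls), B_k = sum_{j=0}^{k-1} C(lk, j) (G^N - 1)^{lk - j} (number of non-contracting branch compositions), and suppose e^{1/l} l^{1/l} L^{Nd} < G^N/(G^N - 1). Then D_k * B_k < G^{lkN} for all sufficiently large k. -/
open scoped BigOperators

/-- For `j ≤ k ≤ n`, `choose n j * k! ≤ n ^ k`. -/
lemma aux_choose_mul_factorial_le (n j k : ℕ) (hj : j ≤ k) (hk : k ≤ n) :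
    n.choose j * k.factorial ≤ n ^ k := by
  have h1 : j.factorial * k.descFactorial (k - j) = k.factorial := by
    have := Nat.factorial_mul_descFactorial (Nat.sub_le k j)
    rwa [Nat.sub_sub_self hj] at this
  calc n.choose j * k.factorial
      = (j.factorial * n.choose j) * k.descFactorial (k - j) := by rw [← h1]; ring
    _ = n.descFactorial j * k.descFactorial (k - j) := by
        rw [Nat.descFactorial_eq_factorial_mul_choose n j]
    _ ≤ n ^ j * n ^ (k - j) :=
        Nat.mul_le_mul (Nat.descFactorial_le_pow _ _)
          ((Nat.descFactorial_le_pow _ _).trans (Nat.pow_le_pow_left hk _))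
    _ = n ^ k := by rw [← pow_add, Nat.add_sub_cancel' hj]

/-- For `j ≤ k`, `choose (l*k) j ≤ (e*l)^k`. -/
lemma aux_choose_le_el_pow (l k j : ℕ) (hl : 1 ≤ l) (hj : j ≤ k) :
    (((l * k).choose j : ℝ)) ≤ (Real.exp 1 * l) ^ k := by
  have hk : k ≤ l * k := Nat.le_mul_of_pos_left k hl
  have h := aux_choose_mul_factorial_le (l * k) j k hj hk
  have hfac : (0 : ℝ) < (k.factorial : ℝ) := by exact_mod_cast k.factorial_pos
  have h2 : ((l * k).choose j : ℝ) ≤ ((l * k : ℕ) : ℝ) ^ k / (k.factorial : ℝ) := by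
    rw [le_div_iff₀ hfac]; exact_mod_cast h
  have h4 : (k : ℝ) ^ k / (k.factorial : ℝ) ≤ Real.exp k := by
    simpa using Real.pow_div_factorial_le_exp (k:ℝ) (by positivity) k
  have h5 : Real.exp (k : ℝ) = Real.exp 1 ^ k := by
    rw [← Real.exp_nat_mul]; norm_num
  calc ((l * k).choose j : ℝ) ≤ ((l * k : ℕ) : ℝ) ^ k / (k.factorial : ℝ) := h2
    _ = (l : ℝ) ^ k * ((k : ℝ) ^ k / (k.factorial : ℝ)) := by
        push_cast; rw [mul_pow]; ring
    _ ≤ (l : ℝ) ^ k * Real.exp 1 ^ k := by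
        rw [h5] at h4
        exact mul_le_mul_of_nonneg_left h4 (by positivity)
    _ = (Real.exp 1 * l) ^ k := by rw [mul_pow]; ring

/-- Counting estimate: with `D_k = C L^{kNd}` and
`B_k = ∑_{j=0}^{k-1} C(lk,j) (G^N-1)^{lk-j}`, the assumption
`e^{1/l} l^{1/l} L^{Nd} < G^N/(G^N-1)` implies `D_k B_k < G^{lkN}` for all
sufficiently large `k`. -/
theorem stmt_18 (l N G d : ℕ) (hl : 1 ≤ l) (hN : 2 ≤ N) (hG : 2 ≤ G) (hd : 1 ≤ d)
    (C L : ℝ) (hC : 0 < C) (hL : 1 ≤ L)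
    (hyp : Real.exp (1 / (l : ℝ)) * (l : ℝ) ^ ((1 : ℝ) / l) * L ^ (N * d)
      < (G : ℝ) ^ N / ((G : ℝ) ^ N - 1)) :
    ∃ k0 : ℕ, ∀ k ≥ k0,
      (C * L ^ (k * N * d)) *
        (∑ j ∈ Finset.range k,
          ((l * k).choose j : ℝ) * ((G : ℝ) ^ N - 1) ^ (l * k - j))
        < (G : ℝ) ^ (l * k * N) := by
  have hl0 : (0 : ℝ) < (l : ℝ) := by exact_mod_cast hl
  have hGN : (4 : ℝ) ≤ (G : ℝ) ^ N := by
    calc (4 : ℝ) = 2 ^ 2 := by norm_num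
      _ ≤ (G : ℝ) ^ 2 := by
          apply pow_le_pow_left₀ (by norm_num)
          exact_mod_cast hG
      _ ≤ (G : ℝ) ^ N := by
          apply pow_le_pow_right₀ (by exact_mod_cast le_trans one_le_two hG) hN
  set Q : ℝ := (G : ℝ) ^ N - 1 with hQdef
  have hQ1 : (1 : ℝ) ≤ Q := by simp only [hQdef]; linarith
  have hQ0 : (0 : ℝ) < Q := lt_of_lt_of_le one_pos hQ1
  set β : ℝ := Real.exp (1 / (l : ℝ)) * (l : ℝ) ^ ((1 : ℝ) / l) * L ^ (N * d) with hβdef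
  set ρ : ℝ := (G : ℝ) ^ N / Q with hρdef
  have hβpos : 0 < β := by
    apply mul_pos (mul_pos (Real.exp_pos _) _) (by positivity)
    exact Real.rpow_pos_of_pos hl0 _
  have hρpos : 0 < ρ := by
    apply div_pos (by linarith) hQ0
  set α : ℝ := β / ρ with hαdef
  have hα1 : α < 1 := (div_lt_one hρpos).2 hyp
  have hα0 : 0 < α := div_pos hβpos hρpos
  -- eventually C * k * α ^ k < 1
  have htend : Filter.Tendsto (fun k : ℕ => C * ((k : ℝ) ^ 1 * α ^ k))
      Filter.atTop (nhds (C * 0)) := by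
    exact Filter.Tendsto.const_mul C
      (tendsto_pow_const_mul_const_pow_of_lt_one 1 hα0.le hα1)
  rw [mul_zero] at htend
  have hev := htend.eventually_lt_const one_pos
  rw [Filter.eventually_atTop] at hev
  obtain ⟨k0, hk0⟩ := hev
  refine ⟨max k0 1, fun k hk => ?_⟩
  have hk1 : 1 ≤ k := le_trans (le_max_right _ _) hk
  have hkk0 : k0 ≤ k := le_trans (le_max_left _ _) hk
  have hsmall : C * ((k : ℝ) * α ^ k) < 1 := by simpa using hk0 k hkk0
  have hkle : k ≤ l * k := Nat.le_mul_of_pos_left k hl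
  -- bound the sum
  have hsum : (∑ j ∈ Finset.range k,
      ((l * k).choose j : ℝ) * Q ^ (l * k - j))
      ≤ (k : ℝ) * ((Real.exp 1 * l) ^ k * Q ^ (l * k)) := by
    have hterm : ∀ j ∈ Finset.range k,
        ((l * k).choose j : ℝ) * Q ^ (l * k - j)
          ≤ (Real.exp 1 * l) ^ k * Q ^ (l * k) := by
      intro j hj
      rw [Finset.mem_range] at hj
      apply mul_le_mul (aux_choose_le_el_pow l k j hl hj.le)
        (pow_le_pow_right₀ hQ1 (Nat.sub_le _ _)) (by positivity) (by positivity)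
    calc (∑ j ∈ Finset.range k, ((l * k).choose j : ℝ) * Q ^ (l * k - j))
        ≤ ∑ _j ∈ Finset.range k, (Real.exp 1 * l) ^ k * Q ^ (l * k) :=
          Finset.sum_le_sum hterm
      _ = (k : ℝ) * ((Real.exp 1 * l) ^ k * Q ^ (l * k)) := by
          rw [Finset.sum_const, Finset.card_range, nsmul_eq_mul]
  -- key scalar estimate
  have hkey : C * L ^ (k * N * d) * ((k : ℝ) * (Real.exp 1 * l) ^ k) < ρ ^ (l * k) := by
    have hβpow : (Real.exp 1 * l) ^ k * L ^ (k * N * d) ≤ β ^ (l * k) := by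
      have e1 : Real.exp (1 / (l : ℝ)) ^ (l * k) = Real.exp 1 ^ k := by
        rw [← Real.exp_nat_mul, ← Real.exp_nat_mul]
        congr 1
        push_cast
        field_simp
      have e2 : ((l : ℝ) ^ ((1 : ℝ) / l)) ^ (l * k) = (l : ℝ) ^ k := by
        rw [← Real.rpow_natCast ((l : ℝ) ^ ((1 : ℝ) / l)) (l * k), ← Real.rpow_mul hl0.le]
        rw [← Real.rpow_natCast (l : ℝ) k]
        congr 1
        push_cast
        field_simp
      have e3 : (L ^ (N * d)) ^ (l * k) = L ^ (N * d * (l * k)) := by rw [← pow_mul]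
      have e4 : L ^ (k * N * d) ≤ L ^ (N * d * (l * k)) := by
        apply pow_le_pow_right₀ hL
        calc k * N * d ≤ N * d * k := by ring_nf; omega
          _ ≤ N * d * (l * k) := Nat.mul_le_mul_left _ hkle
      calc (Real.exp 1 * l) ^ k * L ^ (k * N * d)
          ≤ (Real.exp 1 * l) ^ k * L ^ (N * d * (l * k)) := by
            apply mul_le_mul_of_nonneg_left e4 (by positivity)
        _ = Real.exp (1 / (l : ℝ)) ^ (l * k) * ((l : ℝ) ^ ((1 : ℝ) / l)) ^ (l * k)
              * (L ^ (N * d)) ^ (l * k) := by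
            rw [e1, e2, e3, mul_pow]
        _ = β ^ (l * k) := by rw [hβdef, mul_pow, mul_pow]
    have hβα : β ^ (l * k) = α ^ (l * k) * ρ ^ (l * k) := by
      rw [← mul_pow, hαdef, div_mul_cancel₀ _ (ne_of_gt hρpos)]
    have hαmono : α ^ (l * k) ≤ α ^ k :=
      pow_le_pow_of_le_one hα0.le hα1.le hkle
    calc C * L ^ (k * N * d) * ((k : ℝ) * (Real.exp 1 * l) ^ k)
        = C * ((k : ℝ) * ((Real.exp 1 * l) ^ k * L ^ (k * N * d))) := by ring
      _ ≤ C * ((k : ℝ) * (α ^ (l * k) * ρ ^ (l * k))) := by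
          rw [← hβα]
          gcongr
      _ ≤ C * ((k : ℝ) * (α ^ k * ρ ^ (l * k))) := by gcongr
      _ = C * ((k : ℝ) * α ^ k) * ρ ^ (l * k) := by ring
      _ < 1 * ρ ^ (l * k) := by
          exact mul_lt_mul_of_pos_right hsmall (by positivity)
      _ = ρ ^ (l * k) := one_mul _
  -- assemble
  have hRHS : ρ ^ (l * k) * Q ^ (l * k) = (G : ℝ) ^ (l * k * N) := by
    rw [← mul_pow, hρdef, div_mul_cancel₀ _ (ne_of_gt hQ0), ← pow_mul]
    ring_nf
  calc (C * L ^ (k * N * d)) *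
      (∑ j ∈ Finset.range k, ((l * k).choose j : ℝ) * Q ^ (l * k - j))
      ≤ (C * L ^ (k * N * d)) * ((k : ℝ) * ((Real.exp 1 * l) ^ k * Q ^ (l * k))) := by
        apply mul_le_mul_of_nonneg_left hsum (by positivity)
    _ = C * L ^ (k * N * d) * ((k : ℝ) * (Real.exp 1 * l) ^ k) * Q ^ (l * k) := by ring
    _ < ρ ^ (l * k) * Q ^ (l * k) :=
        mul_lt_mul_of_pos_right hkey (by positivity)
    _ = (G : ℝ) ^ (l * k * N) := hRHS
end
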